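/- arXiv:1706.01571 — 2 statements merged into one kernel-verified Lean document; each statement's English description precedes it below -/
import Mathlib

section
/- Let B be an integral domain and let f, g ∈ B be a regular sequence (f is a nonzerodivisor and g is a nonzerodivisor on B/(f)). Then B = B[1/f] ∩ B[1/g], i.e., any element of the fraction field of B that lies in both localizations B[1/f] and B[1/g] lies in B. -/
/-!
If `x * f ^ n = a` and `x * g ^ m = c` in the fraction field, then `g ^ m * a = f ^ n * c` in `B`.
Since `f, g` is a regular sequence, `g` (hence `g ^ m`) is a nonzerodivisor modulo `f ^ n`, so
`f ^ n ∣ a`, and cancelling `f ^ n` shows that `x` lies in `B`.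
-/

section Divisibility

variable {M : Type*} [CommMonoid M]

theorem dvd_of_dvd_pow_mul {d g : M} (hg : ∀ b, d ∣ g * b → d ∣ b) (k : ℕ) {b : M}
    (h : d ∣ g ^ k * b) : d ∣ b := by
  induction k generalizing b with
  | zero => simpa using h
  | succ k ih => exact hg b (ih (by rwa [← mul_assoc, ← pow_succ]))

theorem pow_dvd_of_dvd_mul {f g : M} (hf : IsLeftRegular f) (hg : ∀ b, f ∣ g * b → f ∣ b)
    (n : ℕ) {b : M} (h : f ^ n ∣ g * b) : f ^ n ∣ b := by
  induction n generalizing b with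
  | zero => simp
  | succ n ih =>
    obtain ⟨b', rfl⟩ := hg b (dvd_trans (dvd_pow_self f n.succ_ne_zero) h)
    rw [pow_succ', mul_left_comm] at h
    rw [pow_succ']
    exact mul_dvd_mul_left f (ih (hf.dvd_cancel_left.mp h))

end Divisibility

theorem exists_algebraMap_eq_of_mul_pow_eq {B K : Type*} [CommRing B] [CommRing K] [Algebra B K]
    [IsFractionRing B K] {f g : B} (hf : f ∈ nonZeroDivisors B)
    (hg : ∀ b, f ∣ g * b → f ∣ b) {x : K}
    (hxf : ∃ (a : B) (n : ℕ), x * algebraMap B K f ^ n = algebraMap B K a)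
    (hxg : ∃ (c : B) (m : ℕ), x * algebraMap B K g ^ m = algebraMap B K c) :
    ∃ b : B, x = algebraMap B K b := by
  obtain ⟨a, n, ha⟩ := hxf
  obtain ⟨c, m, hc⟩ := hxg
  have hcross : f ^ n ∣ g ^ m * a := ⟨c, IsFractionRing.injective B K <| by
    simp only [map_mul, map_pow, ← ha, ← hc]
    ring⟩
  have hfreg : IsLeftRegular f := (isRegular_iff_mem_nonZeroDivisors.mpr hf).left
  obtain ⟨a', rfl⟩ := dvd_of_dvd_pow_mul (fun _ ↦ pow_dvd_of_dvd_mul hfreg hg n) m hcross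
  refine ⟨a', (IsLocalization.map_units K ⟨f ^ n, pow_mem hf n⟩).mul_left_cancel ?_⟩
  rw [← map_mul, ← ha, mul_comm, map_pow]

/-- Let `B` be an integral domain and `f, g ∈ B` a regular sequence
(`f` is a nonzerodivisor, i.e. `f ≠ 0`, and `g` is a nonzerodivisor on `B/(f)`).
Then `B = B[1/f] ∩ B[1/g]` inside `Frac(B)`: any element of the fraction field lying in both
localizations lies in `B`. -/
theorem stmt_0 {B : Type*} [CommRing B] [IsDomain B] (f g : B)
    (hf : f ≠ 0)
    (hg : ∀ b : B, g * b ∈ Ideal.span {f} → b ∈ Ideal.span {f})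
    (x : FractionRing B)
    (hxf : ∃ (b : B) (n : ℕ),
      x * (algebraMap B (FractionRing B) f) ^ n = algebraMap B (FractionRing B) b)
    (hxg : ∃ (b : B) (n : ℕ),
      x * (algebraMap B (FractionRing B) g) ^ n = algebraMap B (FractionRing B) b) :
    ∃ b : B, x = algebraMap B (FractionRing B) b := by
  refine exists_algebraMap_eq_of_mul_pow_eq (mem_nonZeroDivisors_of_ne_zero hf) ?_ hxf hxg
  simpa only [Ideal.mem_span_singleton] using hg
end

section
/- Let B ↪ C be an extension of normal (integrally closed) domains such that C is integral over B. Let y ∈ B generate a principal prime ideal (y) ⊆ B, and assume that C ⊗_B B_{(y)} / (y) is a reduced ring, where B_{(y)} is the localization of B at the prime ideal yB. Then C/(y)C is a reduced ring. -/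
/-!
If `x ^ k ∈ yC`, reducedness of the localization gives `b * x = y * c` with `c ∈ C` and
`b ∈ B \ (y)`. Over the integrally closed `B`, the minimal polynomials of `b • x = y • c` are the
rescalings of those of `x` and `c` by `b` and by `y`; comparing coefficients and using that `y` is
prime shows `y ^ (n - i)` divides the `i`-th coefficient of the minimal polynomial of `x`. Hence
`x / y` is integral, so it lies in the integrally closed `C`.
-/

open Polynomial

theorem IsIntegrallyClosed.dvd_of_eval_eq_zero_of_pow_dvd_coeff {R : Type*} [CommRing R]
    [IsDomain R] [IsIntegrallyClosed R] {p : R[X]} (hp : p.Monic) {x y : R} (hy : y ≠ 0)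
    (hx : p.eval x = 0) (hdvd : ∀ i, y ^ (p.natDegree - i) ∣ p.coeff i) : y ∣ x := by
  let K := FractionRing R
  -- `x / y` is a root of the monic polynomial with coefficients `p.coeff i / y ^ (deg p - i)`.
  have hyK : algebraMap R K y ≠ 0 := by simpa using hy
  set P := (p.map (algebraMap R K)).scaleRoots (algebraMap R K y)⁻¹
  have hP : P ∈ lifts (algebraMap R K) := by
    refine (lifts_iff_coeff_lifts P).mpr fun i => ?_
    obtain ⟨d, hd⟩ := hdvd i
    refine ⟨d, ?_⟩
    rw [coeff_scaleRoots, coeff_map, hp.natDegree_map, hd, map_mul, map_pow, inv_pow,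
      mul_comm, inv_mul_cancel_left₀ (pow_ne_zero _ hyK)]
  obtain ⟨q, hqP, -, hq⟩ :=
    lifts_and_natDegree_eq_and_monic hP ((monic_scaleRoots_iff _).mpr (hp.map _))
  have hroot : eval₂ (algebraMap R K) ((algebraMap R K y)⁻¹ * algebraMap R K x) q = 0 := by
    rw [eval₂_eq_eval_map, hqP, scaleRoots_eval_mul, eval_map, eval₂_hom, hx, map_zero, mul_zero]
  obtain ⟨z, hz⟩ := IsIntegrallyClosed.isIntegral_iff.mp ⟨q, hq, hroot⟩
  refine ⟨z, IsFractionRing.injective R K ?_⟩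
  rw [map_mul, hz, mul_inv_cancel_left₀ hyK]

theorem pow_dvd_coeff_minpoly_of_smul_eq_smul {R S : Type*} [CommRing R] [IsDomain R]
    [IsIntegrallyClosed R] [CommRing S] [IsDomain S] [Algebra R S] [Module.IsTorsionFree R S]
    {y b : R} (hy : Prime y) (hb : ¬y ∣ b) {x c : S} (hx : IsIntegral R x) (hc : IsIntegral R c)
    (h : b • x = y • c) (i : ℕ) :
    y ^ ((minpoly R x).natDegree - i) ∣ (minpoly R x).coeff i := by
  have hb0 : b ≠ 0 := by rintro rfl; exact hb (dvd_zero y)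
  have hminpoly : (minpoly R x).scaleRoots b = (minpoly R c).scaleRoots y := by
    rw [← IsIntegrallyClosed.minpoly_smul hb0 hx, ← IsIntegrallyClosed.minpoly_smul hy.ne_zero hc,
      h]
  have hdeg : (minpoly R x).natDegree = (minpoly R c).natDegree := by
    simpa only [natDegree_scaleRoots] using congrArg natDegree hminpoly
  have hcoeff := congrArg (coeff · i) hminpoly
  simp only [coeff_scaleRoots, ← hdeg] at hcoeff
  exact hy.pow_dvd_of_dvd_mul_right _ (fun h => hb (hy.dvd_of_dvd_pow h))
    ⟨_, hcoeff.trans (mul_comm _ _)⟩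

theorem IsLocalization.isReduced_quotient_of_saturated {R : Type*} [CommRing R] (M : Submonoid R)
    (S : Type*) [CommRing S] [Algebra R S] [IsLocalization M S] (I : Ideal R)
    (hI : ∀ x, ∀ m ∈ M, m * x ∈ I → x ∈ I) [IsReduced (S ⧸ I.map (algebraMap R S))] :
    IsReduced (R ⧸ I) := by
  refine ⟨fun t ⟨n, hn⟩ => ?_⟩
  obtain ⟨x, rfl⟩ := Ideal.Quotient.mk_surjective t
  have hloc : IsNilpotent (Ideal.Quotient.mk (I.map (algebraMap R S)) (algebraMap R S x)) :=
    ⟨n, by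
      rw [← map_pow, ← map_pow, Ideal.Quotient.eq_zero_iff_mem]
      exact Ideal.mem_map_of_mem _ (Ideal.Quotient.eq_zero_iff_mem.mp (by rwa [map_pow]))⟩
  obtain ⟨m, hm, hmx⟩ := (IsLocalization.algebraMap_mem_map_algebraMap_iff M (S := S) I x).mp
    (Ideal.Quotient.eq_zero_iff_mem.mp hloc.eq_zero)
  exact Ideal.Quotient.eq_zero_iff_mem.mpr (hI x m hm hmx)

theorem mem_span_algebraMap_of_algebraMap_mul_mem {B C : Type*} [CommRing B] [IsDomain B]
    [IsIntegrallyClosed B] [CommRing C] [IsDomain C] [IsIntegrallyClosed C] [Algebra B C]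
    [Module.IsTorsionFree B C] [Algebra.IsIntegral B C] {y b : B} (hy : Prime y) (hb : ¬y ∣ b)
    {x : C} (h : algebraMap B C b * x ∈ Ideal.span {algebraMap B C y}) :
    x ∈ Ideal.span {algebraMap B C y} := by
  obtain ⟨c, hc⟩ := Ideal.mem_span_singleton.mp h
  have hx := Algebra.IsIntegral.isIntegral (R := B) x
  have hsmul : b • x = y • c := by rw [Algebra.smul_def, Algebra.smul_def, hc]
  have hdvd := pow_dvd_coeff_minpoly_of_smul_eq_smul hy hb hx (Algebra.IsIntegral.isIntegral c)
    hsmul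
  have hmonic := minpoly.monic hx
  refine Ideal.mem_span_singleton.mpr <|
    IsIntegrallyClosed.dvd_of_eval_eq_zero_of_pow_dvd_coeff (hmonic.map (algebraMap B C))
      ?_ ?_ fun i => ?_
  · simpa using hy.ne_zero
  · rw [eval_map, ← aeval_def, minpoly.aeval]
  · rw [hmonic.natDegree_map, coeff_map]
    exact map_pow (algebraMap B C) y _ ▸ map_dvd _ (hdvd i)

/-- Let `B ↪ C` be an extension of normal (integrally closed) domains with `C`
integral over `B`. Let `y ∈ B` generate a principal prime ideal of `B`, and assume that
`C ⊗_B B_{(y)} / (y)` is reduced, where `B_{(y)}` is the localization of `B` at the prime `yB`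
(so that `C ⊗_B B_{(y)}` is the localization of `C` at the image of `B \ yB`).
Then `C/(y)C` is reduced. -/
theorem stmt_1 {B C : Type*} [CommRing B] [IsDomain B] [IsIntegrallyClosed B]
    [CommRing C] [IsDomain C] [IsIntegrallyClosed C]
    [Algebra B C] (hinj : Function.Injective (algebraMap B C))
    [Algebra.IsIntegral B C]
    (y : B) (hy : (Ideal.span {y} : Ideal B).IsPrime)
    (S : Submonoid C)
    (hS : S = Submonoid.map (algebraMap B C) (Ideal.span {y} : Ideal B).primeCompl)
    (hred : IsReduced ((Localization S) ⧸
      (Ideal.span {algebraMap C (Localization S) (algebraMap B C y)}))) :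
    IsReduced (C ⧸ (Ideal.span {algebraMap B C y} : Ideal C)) := by
  rcases eq_or_ne y 0 with rfl | hy0
  · rw [map_zero, Ideal.span_singleton_eq_bot.mpr rfl]
    infer_instance
  have : Module.IsTorsionFree B C := Module.isTorsionFree_iff_algebraMap_injective.mpr hinj
  rw [← Set.image_singleton, ← Ideal.map_span] at hred
  refine IsLocalization.isReduced_quotient_of_saturated S (Localization S) _ ?_
  subst hS
  rintro x _ ⟨b, hb, rfl⟩ hbx
  exact mem_span_algebraMap_of_algebraMap_mul_mem ((Ideal.span_singleton_prime hy0).mp hy)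
    (fun h => hb (Ideal.mem_span_singleton.mpr h)) hbx
end
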